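/- Let x ∈ R^N, 1 < q < ∞, and suppose ‖w‖₂ ≤ ε where y = Ax + w. If x̂ solves the basis pursuit min ‖z‖₁ s.t. ‖y − Az‖₂ ≤ ε and ρ_{q, 4^{q/(q−1)}k}(A) > 0, then ‖x̂ − x‖_q ≤ 2ε / ρ_{q, 4^{q/(q−1)}k}(A) + k^{1/q−1} σ_k(x)₁ and ‖x̂ − x‖₁ ≤ 4 k^{1−1/q} ε / ρ_{q, 4^{q/(q−1)}k}(A) + 4 σ_k(x)₁. -/

import Mathlib

open Finset Matrix

noncomputable def l1 {N : ℕ} (z : Fin N → ℝ) : ℝ := ∑ i, |z i|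
noncomputable def lq {N : ℕ} (q : ℝ) (z : Fin N → ℝ) : ℝ := (∑ i, |z i| ^ q) ^ (1/q)
noncomputable def l2 {m : ℕ} (v : Fin m → ℝ) : ℝ := Real.sqrt (∑ i, (v i)^2)
noncomputable def linf {N : ℕ} (z : Fin N → ℝ) : ℝ := ⨆ i, |z i|
open scoped Classical in
noncomputable def l0 {N : ℕ} (z : Fin N → ℝ) : ℕ := (Finset.univ.filter (fun i => z i ≠ 0)).card
noncomputable def sparsityQ {N : ℕ} (q : ℝ) (z : Fin N → ℝ) : ℝ := (l1 z / lq q z) ^ (q/(q-1))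
noncomputable def cmsv {m N : ℕ} (q s : ℝ) (A : Matrix (Fin m) (Fin N) ℝ) : ℝ :=
  sInf { r | ∃ z : Fin N → ℝ, z ≠ 0 ∧ sparsityQ q z ≤ s ∧ r = l2 (A.mulVec z) / lq q z }

noncomputable def sigmak {N : ℕ} (k : ℕ) (x : Fin N → ℝ) : ℝ :=
  sInf { r | ∃ z : Fin N → ℝ, l0 z ≤ k ∧ r = l1 (x - z) }

/-!
Write `h = x̂ - x`, `K = k^(1 - 1/q)` and `σ = σ_k(x)₁`. Since `x` is feasible, `‖x̂‖₁ ≤ ‖x‖₁`,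
which together with Hölder's inequality on the support of a best `k`-term approximation gives the
cone constraint `‖h‖₁ ≤ 2K‖h‖_q + 2σ`. Both `x̂` and `x` lie in the `ε`-tube around `y`, so
`‖Ah‖₂ ≤ 2ε`. If `σ ≤ K‖h‖_q`, then `‖h‖₁ ≤ 4K‖h‖_q`, i.e. `s_q(h) ≤ 4^(q/(q-1)) k`, and the
definition of `ρ` gives `ρ‖h‖_q ≤ 2ε`; otherwise `‖h‖_q < σ/K`. Either way the `q`-norm bound
holds, and substituting it into the cone constraint gives the `ℓ₁` bound.
-/

section Norms

variable {N : ℕ}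

lemma l1_nonneg (z : Fin N → ℝ) : 0 ≤ l1 z :=
  sum_nonneg fun _ _ => abs_nonneg _

lemma l1_pos {z : Fin N → ℝ} (hz : z ≠ 0) : 0 < l1 z := by
  obtain ⟨i, hi⟩ := Function.ne_iff.mp hz
  exact sum_pos' (fun _ _ => abs_nonneg _) ⟨i, mem_univ _, abs_pos.mpr hi⟩

lemma lq_nonneg (q : ℝ) (z : Fin N → ℝ) : 0 ≤ lq q z :=
  Real.rpow_nonneg (sum_nonneg fun _ _ => Real.rpow_nonneg (abs_nonneg _) _) _

lemma lq_zero {q : ℝ} (hq : q ≠ 0) : lq q (0 : Fin N → ℝ) = 0 := by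
  simp [lq, Real.zero_rpow hq, hq]

lemma lq_pos (q : ℝ) {z : Fin N → ℝ} (hz : z ≠ 0) : 0 < lq q z := by
  obtain ⟨i, hi⟩ := Function.ne_iff.mp hz
  refine Real.rpow_pos_of_pos (sum_pos' (fun _ _ => Real.rpow_nonneg (abs_nonneg _) _) ?_) _
  exact ⟨i, mem_univ _, Real.rpow_pos_of_pos (abs_pos.mpr hi) _⟩

lemma sum_abs_le_card_rpow_mul_lq {q : ℝ} (hq : 1 < q) (T : Finset (Fin N)) (z : Fin N → ℝ) :
    ∑ i ∈ T, |z i| ≤ (#T : ℝ) ^ (1 - 1/q) * lq q z := by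
  have hconj : (1 / (q / (q - 1))) = 1 - 1/q := by field_simp
  have holder := Real.inner_le_Lp_mul_Lq T (fun i => |z i|) (fun _ => (1 : ℝ))
    ((Real.holderConjugate_iff_eq_conjExponent hq).2 rfl)
  simp only [mul_one, abs_abs, abs_one, Real.one_rpow, sum_const, nsmul_eq_mul, hconj] at holder
  have hsub : (∑ i ∈ T, |z i| ^ q) ^ (1/q) ≤ lq q z :=
    Real.rpow_le_rpow (sum_nonneg fun _ _ => Real.rpow_nonneg (abs_nonneg _) _)
      (sum_le_sum_of_subset_of_nonneg (subset_univ _)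
        fun _ _ _ => Real.rpow_nonneg (abs_nonneg _) _)
      (by positivity)
  calc ∑ i ∈ T, |z i| ≤ (∑ i ∈ T, |z i| ^ q) ^ (1/q) * (#T : ℝ) ^ (1 - 1/q) := holder
    _ ≤ lq q z * (#T : ℝ) ^ (1 - 1/q) := by gcongr
    _ = (#T : ℝ) ^ (1 - 1/q) * lq q z := mul_comm _ _

end Norms

lemma l2_nonneg {m : ℕ} (v : Fin m → ℝ) : 0 ≤ l2 v := Real.sqrt_nonneg _

lemma l2_eq_norm {m : ℕ} (v : Fin m → ℝ) : l2 v = ‖WithLp.toLp 2 v‖ := by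
  simp [l2, EuclideanSpace.norm_eq, sq_abs]

lemma l2_sub_le {m : ℕ} (u v : Fin m → ℝ) : l2 (u - v) ≤ l2 u + l2 v := by
  simpa only [l2_eq_norm, WithLp.toLp_sub] using norm_sub_le _ _

section Sparsity

variable {m N : ℕ}

lemma sparsityQ_pos (q : ℝ) {z : Fin N → ℝ} (hz : z ≠ 0) : 0 < sparsityQ q z :=
  Real.rpow_pos_of_pos (div_pos (l1_pos hz) (lq_pos q hz)) _

lemma sparsityQ_le_of_l1_le {q c : ℝ} (hq : 1 < q) (hc : 0 ≤ c) {z : Fin N → ℝ}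
    (h : l1 z ≤ c * lq q z) : sparsityQ q z ≤ c ^ (q/(q-1)) :=
  Real.rpow_le_rpow (div_nonneg (l1_nonneg z) (lq_nonneg q z))
    (div_le_of_le_mul₀ (lq_nonneg q z) hc h) (div_nonneg (by linarith) (by linarith))

lemma cmsv_zero (q : ℝ) (A : Matrix (Fin m) (Fin N) ℝ) : cmsv q 0 A = 0 := by
  have hempty : { r | ∃ z : Fin N → ℝ, z ≠ 0 ∧ sparsityQ q z ≤ 0 ∧
      r = l2 (A *ᵥ z) / lq q z } = ∅ :=
    Set.eq_empty_of_forall_notMem fun _ ⟨z, hz, hs, _⟩ => (sparsityQ_pos q hz).not_ge hs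
  rw [cmsv, hempty, Real.sInf_empty]

lemma cmsv_mul_lq_le {q s : ℝ} (hq : q ≠ 0) (A : Matrix (Fin m) (Fin N) ℝ) {z : Fin N → ℝ}
    (hs : sparsityQ q z ≤ s) : cmsv q s A * lq q z ≤ l2 (A *ᵥ z) := by
  rcases eq_or_ne z 0 with rfl | hz
  · simp [lq_zero hq, l2_nonneg]
  have hbdd : BddBelow { r | ∃ z : Fin N → ℝ, z ≠ 0 ∧ sparsityQ q z ≤ s ∧
      r = l2 (A *ᵥ z) / lq q z } :=
    ⟨0, fun _ ⟨z, _, _, hr⟩ => hr ▸ div_nonneg (l2_nonneg _) (lq_nonneg q z)⟩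
  exact (le_div_iff₀ (lq_pos q hz)).mp (csInf_le hbdd ⟨z, hz, hs, rfl⟩)

end Sparsity

section BestTermApproximation

variable {N : ℕ}

lemma sigmak_nonneg (k : ℕ) (x : Fin N → ℝ) : 0 ≤ sigmak k x :=
  le_csInf ⟨l1 x, 0, by simp [l0], by simp⟩ fun _ ⟨z, _, hr⟩ => hr ▸ l1_nonneg (x - z)

open scoped Classical in
lemma sum_compl_support_abs_le_l1_sub (x z : Fin N → ℝ) :
    ∑ i ∈ (univ.filter fun i => z i ≠ 0)ᶜ, |x i| ≤ l1 (x - z) := by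
  calc ∑ i ∈ (univ.filter fun i => z i ≠ 0)ᶜ, |x i|
      = ∑ i ∈ (univ.filter fun i => z i ≠ 0)ᶜ, |(x - z) i| := by
        refine sum_congr rfl fun i hi => ?_
        simp_all
    _ ≤ l1 (x - z) :=
        sum_le_sum_of_subset_of_nonneg (subset_univ _) fun _ _ _ => abs_nonneg _

lemma l1_sub_le_of_l1_le {x xh : Fin N → ℝ} (h : l1 xh ≤ l1 x) (T : Finset (Fin N)) :
    l1 (xh - x) ≤ 2 * ∑ i ∈ T, |(xh - x) i| + 2 * ∑ i ∈ Tᶜ, |x i| := by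
  have hon : ∑ i ∈ T, (|x i| - |(xh - x) i|) ≤ ∑ i ∈ T, |xh i| :=
    sum_le_sum fun i _ => by
      linarith [abs_sub_abs_le_abs_sub (x i) (xh i), abs_sub_comm (xh i) (x i),
        show |(xh - x) i| = |xh i - x i| from rfl]
  have hoff : ∑ i ∈ Tᶜ, (|(xh - x) i| - |x i|) ≤ ∑ i ∈ Tᶜ, |xh i| :=
    sum_le_sum fun i _ => by
      linarith [abs_sub (xh i) (x i), show |(xh - x) i| = |xh i - x i| from rfl]
  rw [sum_sub_distrib] at hon hoff
  have := sum_add_sum_compl T fun i => |xh i|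
  have := sum_add_sum_compl T fun i => |x i|
  have := sum_add_sum_compl T fun i => |(xh - x) i|
  simp only [l1] at h ⊢
  linarith

lemma l1_sub_le_sigmak {q : ℝ} (hq : 1 < q) (k : ℕ) {x xh : Fin N → ℝ} (h : l1 xh ≤ l1 x) :
    l1 (xh - x) ≤ 2 * (k : ℝ) ^ (1 - 1/q) * lq q (xh - x) + 2 * sigmak k x := by
  classical
  suffices (l1 (xh - x) - 2 * (k : ℝ) ^ (1 - 1/q) * lq q (xh - x)) / 2 ≤ sigmak k x by linarith
  refine le_csInf ⟨l1 x, 0, by simp [l0], by simp⟩ fun _ ⟨z, hz, hr⟩ => hr ▸ ?_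
  set T := univ.filter fun i => z i ≠ 0
  have hT : ∑ i ∈ T, |(xh - x) i| ≤ (k : ℝ) ^ (1 - 1/q) * lq q (xh - x) := by
    refine (sum_abs_le_card_rpow_mul_lq hq T _).trans ?_
    have hexp : 0 ≤ 1 - 1/q := by
      rw [sub_nonneg, div_le_one (by linarith)]
      exact hq.le
    gcongr
    · exact lq_nonneg q _
    · exact hz
  linarith [l1_sub_le_of_l1_le h T, sum_compl_support_abs_le_l1_sub x z]

end BestTermApproximation

lemma lq_le_of_l1_le_of_cmsv_pos {m N k : ℕ} {q σ : ℝ} (hq : 1 < q) (hk : 0 < k) (hσ : 0 ≤ σ)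
    (A : Matrix (Fin m) (Fin N) ℝ) (hρ : 0 < cmsv q ((4:ℝ) ^ (q/(q-1)) * (k : ℝ)) A)
    {h : Fin N → ℝ} (hcone : l1 h ≤ 2 * (k : ℝ) ^ (1 - 1/q) * lq q h + 2 * σ) :
    lq q h ≤ l2 (A *ᵥ h) / cmsv q ((4:ℝ) ^ (q/(q-1)) * (k : ℝ)) A +
      (k : ℝ) ^ (1/q - 1) * σ := by
  set K := (k : ℝ) ^ (1 - 1/q)
  have hK : 0 < K := Real.rpow_pos_of_pos (Nat.cast_pos.mpr hk) _
  have hKinv : (k : ℝ) ^ (1/q - 1) = K⁻¹ := by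
    rw [← Real.rpow_neg (Nat.cast_nonneg k), neg_sub]
  rcases le_or_gt σ (K * lq q h) with hσK | hσK
  · have hpow : (4 * K) ^ (q/(q-1)) = (4:ℝ) ^ (q/(q-1)) * k := by
      rw [Real.mul_rpow (by norm_num) hK.le, ← Real.rpow_mul (Nat.cast_nonneg k),
        show (1 - 1/q) * (q/(q-1)) = 1 by field_simp [show q - 1 ≠ 0 by linarith], Real.rpow_one]
    have hs := sparsityQ_le_of_l1_le hq (by positivity : (0:ℝ) ≤ 4 * K) (z := h) (by linarith)
    have hρh := cmsv_mul_lq_le (by linarith) A (hpow ▸ hs)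
    have : 0 ≤ (k : ℝ) ^ (1/q - 1) * σ := by positivity
    linarith [(le_div_iff₀' hρ).mpr hρh]
  · have : lq q h ≤ K⁻¹ * σ := (le_inv_mul_iff₀ hK).mpr hσK.le
    have : 0 ≤ l2 (A *ᵥ h) / cmsv q ((4:ℝ) ^ (q/(q-1)) * (k : ℝ)) A :=
      div_nonneg (l2_nonneg _) hρ.le
    rw [hKinv]
    linarith

theorem stmt18 {m N k : ℕ} (A : Matrix (Fin m) (Fin N) ℝ)
    (x xh : Fin N → ℝ) (w y : Fin m → ℝ) (ε : ℝ)
    (hy : y = A.mulVec x + w) (hw : l2 w ≤ ε) (q : ℝ) (hq : 1 < q)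
    (hfeas : l2 (y - A.mulVec xh) ≤ ε)
    (hmin : ∀ z : Fin N → ℝ, l2 (y - A.mulVec z) ≤ ε → l1 xh ≤ l1 z)
    (hρ : 0 < cmsv q ((4:ℝ) ^ (q/(q-1)) * (k : ℝ)) A) :
    lq q (xh - x) ≤ 2 * ε / cmsv q ((4:ℝ) ^ (q/(q-1)) * (k : ℝ)) A +
        (k : ℝ) ^ (1/q - 1) * sigmak k x ∧
      l1 (xh - x) ≤ 4 * (k : ℝ) ^ (1 - 1/q) * ε / cmsv q ((4:ℝ) ^ (q/(q-1)) * (k : ℝ)) A +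
        4 * sigmak k x := by
  set ρ := cmsv q ((4:ℝ) ^ (q/(q-1)) * (k : ℝ)) A
  -- for `k = 0` the infimum defining `ρ` is over the empty set, hence `0` by convention
  have hk : 0 < k := Nat.pos_of_ne_zero fun hk => by simp [ρ, hk, cmsv_zero] at hρ
  have hcone := l1_sub_le_sigmak hq k (hmin x (by rwa [hy, add_sub_cancel_left]))
  have htube : l2 (A *ᵥ (xh - x)) ≤ 2 * ε := by
    have hsplit : A *ᵥ (xh - x) = w - (y - A *ᵥ xh) := by
      rw [mulVec_sub, hy]; abel
    linarith [hsplit ▸ l2_sub_le w (y - A *ᵥ xh)]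
  have hlq : lq q (xh - x) ≤ 2 * ε / ρ + (k : ℝ) ^ (1/q - 1) * sigmak k x :=
    (lq_le_of_l1_le_of_cmsv_pos hq hk (sigmak_nonneg k x) A hρ hcone).trans
      (by gcongr)
  refine ⟨hlq, ?_⟩
  have hKK : (k : ℝ) ^ (1 - 1/q) * (k : ℝ) ^ (1/q - 1) = 1 := by
    rw [← Real.rpow_add (Nat.cast_pos.mpr hk)]; simp
  calc l1 (xh - x) ≤ 2 * (k : ℝ) ^ (1 - 1/q) * lq q (xh - x) + 2 * sigmak k x := hcone
    _ ≤ 2 * (k : ℝ) ^ (1 - 1/q) * (2 * ε / ρ + (k : ℝ) ^ (1/q - 1) * sigmak k x)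
        + 2 * sigmak k x := by gcongr
    _ = 4 * (k : ℝ) ^ (1 - 1/q) * ε / ρ + 4 * sigmak k x := by
      linear_combination (2 * sigmak k x) * hKK
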